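/- arXiv:2107.05119 — 2 statements merged into one kernel-verified Lean document; each statement's English description precedes it below -/
import Mathlib

section
/- Let P ∈ H_m(ℝ^n) and Q ∈ H_k(ℝ^n) be harmonic homogeneous polynomials. Then for every ℓ ≥ 0, Δ^ℓ(P·Q) = 2^ℓ Σ_{|α|=ℓ} (∂^α P)(∂^α Q), where the sum is over multi-indices α of total order ℓ. In particular Δ^ℓ(P·Q) = 0 for ℓ ≥ min(m,k)+1. -/
noncomputable section

/-- The Euclidean Laplacian on polynomials. -/
def Lap {n : ℕ} (P : MvPolynomial (Fin n) ℝ) : MvPolynomial (Fin n) ℝ :=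
  ∑ i : Fin n, MvPolynomial.pderiv i (MvPolynomial.pderiv i P)

/-- Iterated partial derivative along a sequence `s` of coordinate directions
(`∂^α` where the multi-index `α` records the multiplicities of `s`). -/
def dseq {n ℓ : ℕ} (s : Fin ℓ → Fin n) (P : MvPolynomial (Fin n) ℝ) :
    MvPolynomial (Fin n) ℝ :=
  (List.ofFn s).foldr (fun i Q => MvPolynomial.pderiv i Q) P


/-!
Since `Δ` is a second-order operator, `Δ(AB) = ΔA · B + A · ΔB + 2 Σᵢ ∂ᵢA ∂ᵢB`. Partial
derivatives commute with `Δ`, so every `∂^α P`, `∂^α Q` is again harmonic and the first two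
terms vanish at each step; iterating gives the formula. Differentiating a homogeneous polynomial
of degree `m` more than `m` times gives zero, which yields the vanishing.
-/

open MvPolynomial

namespace MvPolynomial

variable {R σ : Type*}

theorem pderiv_pderiv_comm [CommRing R] (i j : σ) (p : MvPolynomial σ R) :
    pderiv i (pderiv j p) = pderiv j (pderiv i p) := by
  classical
  have hcomm : ⁅pderiv i, pderiv j⁆ = (0 : Derivation R (MvPolynomial σ R) (MvPolynomial σ R)) :=
    derivation_ext fun l => by
      rw [Derivation.commutator_apply, pderiv_X, pderiv_X]
      simp only [Pi.single_apply]
      split_ifs <;> simp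
  have := congr($hcomm p)
  rwa [Derivation.commutator_apply, Derivation.zero_apply, sub_eq_zero] at this

theorem pderiv_eq_zero_of_isHomogeneous_zero [CommSemiring R] (i : σ) {p : MvPolynomial σ R}
    (hp : p.IsHomogeneous 0) : pderiv i p = 0 := by
  rw [← totalDegree_zero_iff_isHomogeneous, totalDegree_eq_zero_iff_eq_C] at hp
  rw [hp, pderiv_C]

end MvPolynomial

section Laplacian

variable {n : ℕ}

theorem Lap_smul (c : ℝ) (A : MvPolynomial (Fin n) ℝ) : Lap (c • A) = c • Lap A := by
  simp [Lap, Finset.smul_sum]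

theorem Lap_sum {ι : Type*} (t : Finset ι) (f : ι → MvPolynomial (Fin n) ℝ) :
    Lap (∑ a ∈ t, f a) = ∑ a ∈ t, Lap (f a) := by
  simp only [Lap, map_sum]
  exact Finset.sum_comm

theorem Lap_pderiv (i : Fin n) (P : MvPolynomial (Fin n) ℝ) :
    Lap (pderiv i P) = pderiv i (Lap P) := by
  simp only [Lap, map_sum, pderiv_pderiv_comm _ i]

theorem Lap_mul (A B : MvPolynomial (Fin n) ℝ) :
    Lap (A * B) = Lap A * B + A * Lap B + 2 * ∑ i : Fin n, pderiv i A * pderiv i B := by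
  have hsecond (i : Fin n) : pderiv i (pderiv i (A * B)) =
      pderiv i (pderiv i A) * B + A * pderiv i (pderiv i B) + 2 * (pderiv i A * pderiv i B) := by
    rw [pderiv_mul, map_add, pderiv_mul, pderiv_mul]
    ring
  simp only [Lap, hsecond, Finset.sum_add_distrib, Finset.sum_mul, Finset.mul_sum]

theorem Lap_mul_of_harmonic {A B : MvPolynomial (Fin n) ℝ} (hA : Lap A = 0) (hB : Lap B = 0) :
    Lap (A * B) = (2 : ℝ) • ∑ i : Fin n, pderiv i A * pderiv i B := by
  rw [Lap_mul, hA, hB, zero_mul, mul_zero, zero_add, zero_add, ← map_ofNat C, C_mul']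

end Laplacian

section IteratedDerivative

variable {n ℓ : ℕ}

theorem dseq_cons (i : Fin n) (s : Fin ℓ → Fin n) (P : MvPolynomial (Fin n) ℝ) :
    dseq (Fin.cons i s) P = pderiv i (dseq s P) := by
  simp [dseq, List.ofFn_succ]

theorem Lap_dseq (s : Fin ℓ → Fin n) (P : MvPolynomial (Fin n) ℝ) :
    Lap (dseq s P) = dseq s (Lap P) := by
  induction ℓ with
  | zero => rfl
  | succ ℓ ih => rw [← Fin.cons_self_tail s, dseq_cons, dseq_cons, Lap_pderiv, ih]

theorem dseq_zero (s : Fin ℓ → Fin n) : dseq s (0 : MvPolynomial (Fin n) ℝ) = 0 := by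
  induction ℓ with
  | zero => rfl
  | succ ℓ ih => rw [← Fin.cons_self_tail s, dseq_cons, ih, map_zero]

theorem Lap_dseq_eq_zero (s : Fin ℓ → Fin n) {P : MvPolynomial (Fin n) ℝ} (hP : Lap P = 0) :
    Lap (dseq s P) = 0 := by
  rw [Lap_dseq, hP, dseq_zero]

theorem sum_dseq_mul_succ (P Q : MvPolynomial (Fin n) ℝ) :
    ∑ s : Fin (ℓ + 1) → Fin n, dseq s P * dseq s Q =
      ∑ s : Fin ℓ → Fin n, ∑ i : Fin n, pderiv i (dseq s P) * pderiv i (dseq s Q) := by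
  rw [Finset.sum_comm, ← Fintype.sum_prod_type']
  exact (Fintype.sum_equiv (Fin.consEquiv fun _ => Fin n) _ _
    fun ⟨i, s⟩ => by simp [Fin.consEquiv, dseq_cons]).symm

theorem MvPolynomial.IsHomogeneous.dseq {m : ℕ} (s : Fin ℓ → Fin n)
    {P : MvPolynomial (Fin n) ℝ} (hP : P.IsHomogeneous m) : (dseq s P).IsHomogeneous (m - ℓ) := by
  induction ℓ with
  | zero => exact hP
  | succ ℓ ih =>
    rw [← Fin.cons_self_tail s, dseq_cons, ← Nat.sub_sub]
    exact (ih _).pderiv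

theorem dseq_eq_zero_of_lt {m : ℕ} (s : Fin ℓ → Fin n) {P : MvPolynomial (Fin n) ℝ}
    (hP : P.IsHomogeneous m) (hm : m < ℓ) : dseq s P = 0 := by
  obtain ⟨ℓ, rfl⟩ := Nat.exists_eq_add_of_lt hm
  rw [← Fin.cons_self_tail s, dseq_cons]
  apply pderiv_eq_zero_of_isHomogeneous_zero
  simpa using hP.dseq (Fin.tail s)

end IteratedDerivative

theorem Lap_iterate_mul_of_harmonic {n : ℕ} {P Q : MvPolynomial (Fin n) ℝ}
    (hP : Lap P = 0) (hQ : Lap Q = 0) (ℓ : ℕ) :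
    Lap^[ℓ] (P * Q) = (2 : ℝ) ^ ℓ • ∑ s : Fin ℓ → Fin n, dseq s P * dseq s Q := by
  induction ℓ with
  | zero => simp [Finset.univ_unique, dseq]
  | succ ℓ ih =>
    simp only [Function.iterate_succ_apply', ih, Lap_smul, Lap_sum,
      Lap_mul_of_harmonic (Lap_dseq_eq_zero _ hP) (Lap_dseq_eq_zero _ hQ), ← Finset.smul_sum,
      sum_dseq_mul_succ, smul_smul, pow_succ]

/-- For harmonic homogeneous polynomials `P ∈ H_m`, `Q ∈ H_k`:
`Δ^ℓ (P·Q) = 2^ℓ Σ_{|α|=ℓ} ∂^α P · ∂^α Q` (the sum over multi-indices with multiplicity,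
i.e. over sequences of `ℓ` coordinate directions); in particular `Δ^ℓ (P·Q) = 0` for
`ℓ ≥ min(m,k) + 1`. -/
theorem xray_stmt11 {n m k : ℕ} (P Q : MvPolynomial (Fin n) ℝ)
    (hP : Lap P = 0) (hPm : P.IsHomogeneous m)
    (hQ : Lap Q = 0) (hQk : Q.IsHomogeneous k) :
    (∀ ℓ : ℕ, Lap^[ℓ] (P * Q) = (2 : ℝ) ^ ℓ • ∑ s : Fin ℓ → Fin n, dseq s P * dseq s Q) ∧
    (∀ ℓ : ℕ, min m k + 1 ≤ ℓ → Lap^[ℓ] (P * Q) = 0) := by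
  refine ⟨Lap_iterate_mul_of_harmonic hP hQ, fun ℓ hℓ => ?_⟩
  rw [Lap_iterate_mul_of_harmonic hP hQ, Finset.sum_eq_zero, smul_zero]
  intro s _
  rcases le_total m k with hmk | hkm
  · rw [dseq_eq_zero_of_lt s hPm (by omega), zero_mul]
  · rw [dseq_eq_zero_of_lt s hQk (by omega), mul_zero]
end
end

section
/- Let n ≥ 2, m ≥ 0, k ≥ 0, and let W be a smooth function on S^{n-1} with a nonzero spherical harmonic component of degree ≥ m. Then there exist linear functions f₁, ..., f_k ∈ Ω₁ such that the product f_k ⋯ f₁ · W has a nonzero spherical harmonic component of degree ≥ m+k. In particular there exists f in the space S_k of sums of spherical harmonics of degree ≤ k with parity k with deg(f·W) ≥ m+k. -/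
open scoped RealInnerProductSpace

noncomputable section

abbrev E (n : ℕ) := EuclideanSpace ℝ (Fin n)

def evalP {n : ℕ} (P : MvPolynomial (Fin n) ℝ) (v : E n) : ℝ :=
  MvPolynomial.eval (fun i => v i) P

def sphereS (n : ℕ) : Set (E n) := Metric.sphere 0 1

def IsDegLE {n : ℕ} (m : ℕ) (S : Set (E n)) (f : E n → ℝ) : Prop :=
  ∃ P : MvPolynomial (Fin n) ℝ, P.totalDegree ≤ m ∧ ∀ v ∈ S, f v = evalP P v

def HasCompGE {n : ℕ} : ℕ → Set (E n) → (E n → ℝ) → Prop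
  | 0, S, f => ¬ ∀ v ∈ S, f v = 0
  | (m + 1), S, f => ¬ IsDegLE m S f

/-!
It suffices to raise the degree by one with a single coordinate `xᵢ`. Suppose instead that every
`xᵢ W` agreed on the sphere with a polynomial `Pᵢ` of degree `≤ m`; then so does
`W = ∑ xᵢ (xᵢ W)`, with `Q = ∑ Xᵢ Pᵢ` of degree `≤ m + 1`. On the sphere a polynomial of degree
`≤ e + 1` equals `A + B` with forms `A`, `B` of degrees `e + 1` and `e` (pad the lower homogeneous
components with powers of `|x|²`), and since `A`, `B` have opposite parity, `A + B` vanishes on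
the sphere only if `A = B = 0`. Comparing `Xᵢ Q` with `Pᵢ` this way shows that `|x|²` divides
`Xᵢ A` and `Xᵢ B` for every `i`, hence, using two coordinates, `A` and `B` themselves. Dividing
by `|x|²` lowers the degree of `W` on the sphere to `≤ m - 1` (or `W = 0` there if `m = 0`),
contradicting the hypothesis.
-/

open MvPolynomial

namespace MvPolynomial

theorem IsHomogeneous.eval_smul {σ R : Type*} [CommSemiring R] {φ : MvPolynomial σ R} {d : ℕ}
    (hφ : φ.IsHomogeneous d) (c : R) (x : σ → R) :
    eval (c • x) φ = c ^ d * eval x φ := by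
  simp only [eval_eq, Finset.mul_sum]
  refine Finset.sum_congr rfl fun s hs => ?_
  simp only [Pi.smul_apply, smul_eq_mul, mul_pow, Finset.prod_mul_distrib,
    Finset.prod_pow_eq_pow_sum, ← hφ.degree_eq_sum_deg_support hs]
  ring

theorem dvd_of_dvd_X_mul_of_dvd_X_mul {σ R : Type*} [CommRing R] [IsDomain R] {i j : σ}
    (hij : i ≠ j) {p f : MvPolynomial σ R} (hi : p ∣ X i * f) (hj : p ∣ X j * f) : p ∣ f := by
  rcases eq_or_ne p 0 with rfl | hp
  · rw [zero_dvd_iff, mul_eq_zero] at hi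
    simp [hi.resolve_left (X_ne_zero i)]
  obtain ⟨a, ha⟩ := hi
  obtain ⟨b, hb⟩ := hj
  have hab : X j * a = X i * b := mul_left_cancel₀ hp (by linear_combination X i * hb - X j * ha)
  have hXij : ¬ (X i : MvPolynomial σ R) ∣ X j := by rwa [X_dvd_X]
  obtain ⟨c, rfl⟩ : X i ∣ a := (X_prime.dvd_or_dvd ⟨b, hab⟩).resolve_left hXij
  exact ⟨c, mul_left_cancel₀ (X_ne_zero i) (by linear_combination ha)⟩

theorem eq_zero_or_totalDegree_lt_add {σ R : Type*} [CommSemiring R]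
    {p q : MvPolynomial σ R} {m : ℕ} (hp : p = 0 ∨ p.totalDegree < m)
    (hq : q = 0 ∨ q.totalDegree < m) : p + q = 0 ∨ (p + q).totalDegree < m := by
  rcases hp with rfl | hp
  · simpa using hq
  rcases hq with rfl | hq
  · simpa using Or.inr hp
  exact Or.inr ((totalDegree_add p q).trans_lt (max_lt hp hq))

end MvPolynomial

variable {n : ℕ}

theorem sum_sq_eq_one_of_mem_sphereS {v : E n} (hv : v ∈ sphereS n) : ∑ i, v i ^ 2 = 1 := by
  have hv1 : ‖v‖ = 1 := mem_sphere_zero_iff_norm.mp hv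
  simpa [hv1] using (EuclideanSpace.norm_sq_eq v).symm

theorem neg_mem_sphereS {v : E n} (hv : v ∈ sphereS n) : -v ∈ sphereS n := by
  simpa [sphereS] using hv

theorem MvPolynomial.IsHomogeneous.evalP_neg {φ : MvPolynomial (Fin n) ℝ} {d : ℕ}
    (hφ : φ.IsHomogeneous d) (v : E n) : evalP φ (-v) = (-1) ^ d * evalP φ v := by
  have hv : (fun i => (-v) i) = (-1 : ℝ) • fun i => v i := by
    funext i
    simp
  rw [evalP, evalP, hv, hφ.eval_smul]

theorem MvPolynomial.IsHomogeneous.eq_zero_of_evalP_sphereS {φ : MvPolynomial (Fin n) ℝ} {d : ℕ}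
    (hd : 0 < d) (hφ : φ.IsHomogeneous d) (h : ∀ v ∈ sphereS n, evalP φ v = 0) : φ = 0 := by
  refine hφ.eq_zero_of_forall_eval_eq_zero fun x => ?_
  rcases eq_or_ne x 0 with rfl | hx
  · simpa [zero_pow hd.ne'] using hφ.eval_smul 0 0
  set y : E n := WithLp.toLp 2 x
  have hy : y ≠ 0 := by simpa [y] using hx
  have hu : ‖y‖⁻¹ • y ∈ sphereS n := by
    simpa [sphereS] using norm_smul_inv_norm (𝕜 := ℝ) hy
  have hxu : x = ‖y‖ • fun i => (‖y‖⁻¹ • y) i := by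
    ext i
    simp [y, norm_ne_zero_iff.mpr hy]
  rw [hxu, hφ.eval_smul, ← evalP, h _ hu, mul_zero]

theorem MvPolynomial.IsHomogeneous.eq_zero_of_evalP_add_sphereS {φ ψ : MvPolynomial (Fin n) ℝ}
    {a b : ℕ} (ha : 0 < a) (hb : 0 < b) (hab : Odd (a + b)) (hφ : φ.IsHomogeneous a)
    (hψ : ψ.IsHomogeneous b) (h : ∀ v ∈ sphereS n, evalP φ v + evalP ψ v = 0) :
    φ = 0 ∧ ψ = 0 := by
  -- evaluating at `v` and `-v` separates the two forms, which have opposite parity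
  have hsep : ∀ v ∈ sphereS n, evalP φ v = 0 ∧ evalP ψ v = 0 := by
    intro v hv
    have hneg := h (-v) (neg_mem_sphereS hv)
    rw [hφ.evalP_neg, hψ.evalP_neg] at hneg
    rcases Nat.even_or_odd a with ha2 | ha2
    · rw [ha2.neg_one_pow, ((Nat.odd_add'.mp hab).mpr ha2).neg_one_pow] at hneg
      constructor <;> linarith [h v hv]
    · rw [ha2.neg_one_pow, ((Nat.odd_add.mp hab).mp ha2).neg_one_pow] at hneg
      constructor <;> linarith [h v hv]
  exact ⟨hφ.eq_zero_of_evalP_sphereS ha fun v hv => (hsep v hv).1,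
    hψ.eq_zero_of_evalP_sphereS hb fun v hv => (hsep v hv).2⟩

def sumSq (n : ℕ) : MvPolynomial (Fin n) ℝ := ∑ i, X i ^ 2

theorem isHomogeneous_sumSq : (sumSq n).IsHomogeneous 2 :=
  IsHomogeneous.sum _ _ _ fun i _ => isHomogeneous_X_pow i 2

theorem sumSq_ne_zero (hn : n ≠ 0) : sumSq n ≠ 0 := by
  intro h
  have h1 := congrArg (eval fun _ => (1 : ℝ)) h
  simp [sumSq, hn] at h1

theorem evalP_sumSq {v : E n} (hv : v ∈ sphereS n) : evalP (sumSq n) v = 1 := by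
  simpa [evalP, sumSq] using sum_sq_eq_one_of_mem_sphereS hv

theorem totalDegree_add_two_of_isHomogeneous_sumSq_mul (hn : n ≠ 0)
    {T : MvPolynomial (Fin n) ℝ} (hT : T ≠ 0) {d : ℕ} (h : (sumSq n * T).IsHomogeneous d) :
    T.totalDegree + 2 = d := by
  have hne := sumSq_ne_zero hn
  rw [← h.totalDegree (mul_ne_zero hne hT), totalDegree_mul_of_isDomain hne hT,
    isHomogeneous_sumSq.totalDegree hne, add_comm]

/-- The form of degree `e` that agrees on the sphere with the sum of the homogeneous components
of `P` of degree `≡ e [MOD 2]`. -/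
def homogenizeOnSphere (e : ℕ) (P : MvPolynomial (Fin n) ℝ) : MvPolynomial (Fin n) ℝ :=
  ∑ j ∈ Finset.range (e + 1),
    if Even (e - j) then homogeneousComponent j P * sumSq n ^ ((e - j) / 2) else 0

theorem isHomogeneous_homogenizeOnSphere (e : ℕ) (P : MvPolynomial (Fin n) ℝ) :
    (homogenizeOnSphere e P).IsHomogeneous e := by
  refine IsHomogeneous.sum _ _ _ fun j hj => ?_
  split_ifs with he
  · have hdeg : j + 2 * ((e - j) / 2) = e := by
      have := Finset.mem_range.mp hj
      obtain ⟨r, hr⟩ := he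
      omega
    simpa [hdeg] using
      (homogeneousComponent_isHomogeneous j P).mul (isHomogeneous_sumSq.pow ((e - j) / 2))
  · exact isHomogeneous_zero _ _ _

theorem evalP_homogenizeOnSphere (e : ℕ) (P : MvPolynomial (Fin n) ℝ) {v : E n}
    (hv : v ∈ sphereS n) :
    evalP (homogenizeOnSphere e P) v =
      ∑ j ∈ Finset.range (e + 1),
        if Even (e - j) then evalP (homogeneousComponent j P) v else 0 := by
  have h1 := evalP_sumSq hv
  simp only [evalP] at h1 ⊢
  simp only [homogenizeOnSphere, map_sum, apply_ite (eval _), map_mul, map_pow, h1, one_pow,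
    mul_one, map_zero]

theorem evalP_homogenizeOnSphere_add {e : ℕ} {P : MvPolynomial (Fin n) ℝ}
    (hP : P.totalDegree ≤ e + 1) {v : E n} (hv : v ∈ sphereS n) :
    evalP (homogenizeOnSphere (e + 1) P) v + evalP (homogenizeOnSphere e P) v = evalP P v := by
  have hparity : ∀ j ∈ Finset.range (e + 1),
      ((if Even (e + 1 - j) then evalP (homogeneousComponent j P) v else 0) +
        if Even (e - j) then evalP (homogeneousComponent j P) v else 0) =
      evalP (homogeneousComponent j P) v := by
    intro j hj
    have : Even (e + 1 - j) ↔ ¬ Even (e - j) := by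
      rw [show e + 1 - j = e - j + 1 by have := Finset.mem_range.mp hj; omega, Nat.even_add_one]
    by_cases h : Even (e - j) <;> simp [h, this]
  have hsum : ∑ j ∈ Finset.range (e + 2), homogeneousComponent j P = P := by
    rw [← Finset.sum_range_add_sum_Ico _ (by omega : P.totalDegree + 1 ≤ e + 2),
      sum_homogeneousComponent, add_eq_left]
    exact Finset.sum_eq_zero fun j hj =>
      homogeneousComponent_eq_zero _ _ (by have := (Finset.mem_Ico.mp hj).1; omega)
  rw [evalP_homogenizeOnSphere _ _ hv, evalP_homogenizeOnSphere _ _ hv, Finset.sum_range_succ,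
    add_right_comm, ← Finset.sum_add_distrib, Finset.sum_congr rfl hparity, Nat.sub_self,
    if_pos Even.zero]
  conv_rhs => rw [← hsum, Finset.sum_range_succ]
  simp only [evalP, map_add, map_sum]

theorem sumSq_dvd_homogenizeOnSphere {e : ℕ} {P : MvPolynomial (Fin n) ℝ}
    (hP : P.totalDegree < e) : sumSq n ∣ homogenizeOnSphere e P := by
  refine Finset.dvd_sum fun j hj => ?_
  split_ifs with he
  · rcases lt_or_ge P.totalDegree j with hj' | hj'
    · simp [homogeneousComponent_eq_zero _ _ hj']
    · obtain ⟨r, hr⟩ := he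
      exact (dvd_pow_self _ (by omega)).mul_left _
  · exact dvd_zero _

theorem isHomogeneous_X_mul_homogenizeOnSphere (i : Fin n) (e : ℕ) (P : MvPolynomial (Fin n) ℝ) :
    (X i * homogenizeOnSphere e P).IsHomogeneous (e + 1) := by
  simpa [add_comm] using (isHomogeneous_X ℝ i).mul (isHomogeneous_homogenizeOnSphere e P)

theorem X_mul_homogenizeOnSphere_of_coord_mul {m : ℕ}
    {Q P : MvPolynomial (Fin n) ℝ} (hQ : Q.totalDegree ≤ m + 1) (hP : P.totalDegree ≤ m + 2)
    {i : Fin n} (hQP : ∀ v ∈ sphereS n, v i * evalP Q v = evalP P v) :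
    X i * homogenizeOnSphere (m + 1) Q = homogenizeOnSphere (m + 2) P ∧
      X i * homogenizeOnSphere m Q = homogenizeOnSphere (m + 1) P := by
  have hsum : ∀ v ∈ sphereS n,
      evalP (X i * homogenizeOnSphere (m + 1) Q - homogenizeOnSphere (m + 2) P) v +
        evalP (X i * homogenizeOnSphere m Q - homogenizeOnSphere (m + 1) P) v = 0 := by
    intro v hv
    have hQv := evalP_homogenizeOnSphere_add hQ hv
    have hPv := evalP_homogenizeOnSphere_add (e := m + 1) hP hv
    have hQPv := hQP v hv
    simp only [evalP, map_sub, map_mul, eval_X] at hQv hPv hQPv ⊢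
    linear_combination v i * hQv - hPv + hQPv
  obtain ⟨h₁, h₂⟩ := IsHomogeneous.eq_zero_of_evalP_add_sphereS (by omega) (by omega)
    ⟨m + 1, by ring⟩ ((isHomogeneous_X_mul_homogenizeOnSphere _ _ _).sub
      (isHomogeneous_homogenizeOnSphere _ _))
    ((isHomogeneous_X_mul_homogenizeOnSphere _ _ _).sub (isHomogeneous_homogenizeOnSphere _ _))
    hsum
  exact ⟨sub_eq_zero.mp h₁, sub_eq_zero.mp h₂⟩

theorem sumSq_dvd_homogenizeOnSphere_of_forall_coord_mul (hn : 2 ≤ n) {m : ℕ}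
    {Q : MvPolynomial (Fin n) ℝ} (hQ : Q.totalDegree ≤ m + 1)
    {P : Fin n → MvPolynomial (Fin n) ℝ} (hP : ∀ i, (P i).totalDegree ≤ m)
    (hQP : ∀ i, ∀ v ∈ sphereS n, v i * evalP Q v = evalP (P i) v) :
    sumSq n ∣ homogenizeOnSphere (m + 1) Q ∧ sumSq n ∣ homogenizeOnSphere m Q := by
  have hXQ i := X_mul_homogenizeOnSphere_of_coord_mul hQ (by have := hP i; omega) (hQP i)
  have hdvd i : sumSq n ∣ X i * homogenizeOnSphere (m + 1) Q ∧
      sumSq n ∣ X i * homogenizeOnSphere m Q := by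
    rw [(hXQ i).1, (hXQ i).2]
    exact ⟨sumSq_dvd_homogenizeOnSphere (by have := hP i; omega),
      sumSq_dvd_homogenizeOnSphere (by have := hP i; omega)⟩
  have h01 : (⟨0, by omega⟩ : Fin n) ≠ ⟨1, by omega⟩ := by simp
  exact ⟨dvd_of_dvd_X_mul_of_dvd_X_mul h01 (hdvd _).1 (hdvd _).1,
    dvd_of_dvd_X_mul_of_dvd_X_mul h01 (hdvd _).2 (hdvd _).2⟩

theorem not_hasCompGE_of_eqOn {m : ℕ} {S : Set (E n)} {f : E n → ℝ}
    {P : MvPolynomial (Fin n) ℝ} (hfP : ∀ v ∈ S, f v = evalP P v)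
    (hP : P = 0 ∨ P.totalDegree < m) : ¬ HasCompGE m S f := by
  cases m with
  | zero =>
    obtain rfl := hP.resolve_right (Nat.not_lt_zero _)
    simpa [HasCompGE, evalP] using hfP
  | succ m =>
    simp only [HasCompGE, not_not]
    exact ⟨P, by rcases hP with rfl | hP <;> [simp; omega], hfP⟩

theorem HasCompGE.exists_coord_mul (hn : 2 ≤ n) {m : ℕ} {W : E n → ℝ}
    (h : HasCompGE m (sphereS n) W) :
    ∃ i : Fin n, HasCompGE (m + 1) (sphereS n) (fun v => v i * W v) := by
  by_contra! hc
  choose P hPdeg hPW using fun i => not_not.mp (hc i)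
  set Q := ∑ i, X i * P i
  have hWQ : ∀ v ∈ sphereS n, W v = evalP Q v := by
    intro v hv
    calc W v = ∑ i, v i * (v i * W v) := by
          simp_rw [← mul_assoc, ← sq, ← Finset.sum_mul, sum_sq_eq_one_of_mem_sphereS hv, one_mul]
      _ = evalP Q v := by simp [Q, evalP, hPW _ v hv]
  have hQdeg : Q.totalDegree ≤ m + 1 :=
    (totalDegree_finsetSum _ _).trans <| Finset.sup_le fun i _ =>
      (totalDegree_mul _ _).trans (by rw [totalDegree_X]; have := hPdeg i; omega)
  obtain ⟨⟨T, hT⟩, ⟨U, hU⟩⟩ := sumSq_dvd_homogenizeOnSphere_of_forall_coord_mul hn hQdeg hPdeg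
    fun i v hv => by rw [← hWQ v hv]; exact hPW i v hv
  refine not_hasCompGE_of_eqOn (P := T + U) (fun v hv => ?_) ?_ h
  · rw [hWQ v hv, ← evalP_homogenizeOnSphere_add hQdeg hv, hT, hU]
    have := evalP_sumSq hv
    simp only [evalP, map_add, map_mul] at this ⊢
    rw [this, one_mul, one_mul]
  · have hdeg {T : MvPolynomial (Fin n) ℝ} {d : ℕ} (hd : d ≤ m + 1)
        (hhom : (sumSq n * T).IsHomogeneous d) : T = 0 ∨ T.totalDegree < m :=
      (eq_or_ne T 0).imp_right fun hT0 => by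
        have := totalDegree_add_two_of_isHomogeneous_sumSq_mul (by omega) hT0 hhom
        omega
    exact eq_zero_or_totalDegree_lt_add
      (hdeg le_rfl (hT ▸ isHomogeneous_homogenizeOnSphere (m + 1) Q))
      (hdeg (by omega) (hU ▸ isHomogeneous_homogenizeOnSphere m Q))

theorem HasCompGE.exists_coord_prod_mul (hn : 2 ≤ n) {m : ℕ} {W : E n → ℝ}
    (h : HasCompGE m (sphereS n) W) (k : ℕ) :
    ∃ idx : Fin k → Fin n,
      HasCompGE (m + k) (sphereS n) (fun v => (∏ j, v (idx j)) * W v) := by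
  induction k with
  | zero => exact ⟨Fin.elim0, by simpa using h⟩
  | succ k ih =>
    obtain ⟨idx, hidx⟩ := ih
    obtain ⟨i, hi⟩ := hidx.exists_coord_mul hn
    refine ⟨Fin.cons i idx, ?_⟩
    rw [← add_assoc]
    convert hi using 2 with v
    simp only [Fin.prod_univ_succ, Fin.cons_zero, Fin.cons_succ]
    ring

theorem xray_stmt13_general {n m k : ℕ} (hn : 2 ≤ n) (W : E n → ℝ)
    (h : HasCompGE m (sphereS n) W) :
    (∃ w : Fin k → E n,
      HasCompGE (m + k) (sphereS n) (fun v => (∏ j : Fin k, ⟪w j, v⟫) * W v)) ∧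
    (∃ P : MvPolynomial (Fin n) ℝ, P.IsHomogeneous k ∧
      HasCompGE (m + k) (sphereS n) (fun v => evalP P v * W v)) := by
  obtain ⟨idx, hidx⟩ := h.exists_coord_prod_mul hn k
  refine ⟨⟨fun j => EuclideanSpace.single (idx j) 1, ?_⟩, ⟨∏ j, X (idx j), ?_, ?_⟩⟩
  · simpa [EuclideanSpace.inner_single_left] using hidx
  · simpa using IsHomogeneous.prod Finset.univ (fun j => X (idx j)) (fun _ => 1)
      fun j _ => isHomogeneous_X ℝ (idx j)
  · simpa [evalP] using hidx

/-- If `W` is a smooth function on `S^{n-1}` (n ≥ 2) with a nonzero spherical harmonic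
component of degree `≥ m`, then there are linear functions `f₁, …, f_k ∈ Ω₁` with
`deg(f_k ⋯ f₁ · W) ≥ m + k`; in particular (the product being the restriction of a
homogeneous polynomial of degree `k`, i.e. an element of `S_k = ⊕_j Ω_{k-2j}`) there is
`f ∈ S_k` with `deg(f·W) ≥ m + k`. -/
theorem xray_stmt13 {n m k : ℕ} (hn : 2 ≤ n) (W : E n → ℝ)
    (hW : ContDiff ℝ (⊤ : ℕ∞) W) (h : HasCompGE m (sphereS n) W) :
    (∃ w : Fin k → E n,
      HasCompGE (m + k) (sphereS n) (fun v => (∏ j : Fin k, ⟪w j, v⟫) * W v)) ∧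
    (∃ P : MvPolynomial (Fin n) ℝ, P.IsHomogeneous k ∧
      HasCompGE (m + k) (sphereS n) (fun v => evalP P v * W v)) :=
  xray_stmt13_general hn W h
end
end
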